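/- Let R = ℚ[q^{±1}, t^{±1}], let n ≥ 1, and for each divisor d of n let J(n,k) denote the ideal of R generated by the Gaussian binomials [n choose n-d]_q for divisors d of n with d ≤ k. Then for k dividing n, J(n,k) is a principal ideal generated by p_{n,k}(q) = ∏_{d | n, d > k} φ_d(q). -/

import Mathlib

open Polynomial Finset

/-- The q-analog `[m]_q = 1 + q + ⋯ + q^{m-1}` as a polynomial over `ℚ`. -/
noncomputable def qAnalog (m : ℕ) : Polynomial ℚ := ∑ i ∈ Finset.range m, X ^ i

/-- The q-factorial `[m]_q! = ∏_{i=1}^m [i]_q`. -/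
noncomputable def qFactorial (m : ℕ) : Polynomial ℚ :=
  ∏ i ∈ Finset.range m, qAnalog (i + 1)

/-- The Gaussian binomial coefficient `[n choose k]_q`. -/
noncomputable def qBinom (n k : ℕ) : Polynomial ℚ :=
  qFactorial n /ₘ (qFactorial k * qFactorial (n - k))

/-- The ring `R = ℚ[q^{±1}, t^{±1}]`, modelled as Laurent polynomials in `t` with
coefficients Laurent polynomials in `q`. -/
noncomputable abbrev LaurentQT : Type := LaurentPolynomial (LaurentPolynomial ℚ)

/-- The variable `q` of `R = ℚ[q^{±1}, t^{±1}]`. -/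
noncomputable def qv : LaurentQT := LaurentPolynomial.C (LaurentPolynomial.T 1)

/-- The variable `t` of `R = ℚ[q^{±1}, t^{±1}]`. -/
noncomputable def tv : LaurentQT := LaurentPolynomial.T 1

/-
Over `ℚ`, `[m]_q! = ∏_{e ≥ 2} φ_e^{⌊m/e⌋}`, so `φ_e` occurs in `[n choose k]_q` with multiplicity
`⌊n/e⌋ - ⌊k/e⌋ - ⌊(n-k)/e⌋ ∈ {0, 1}`; for `e ∣ n` it is `1` exactly when `e ∤ k`. Hence for a
divisor `d ≤ k` of `n` every `φ_e` with `e ∣ n`, `e > k` divides `[n choose n-d]_q`, so `p_{n,k}`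
divides all generators. Conversely the generator `[n choose n-1]_q = [n]_q` equals `p_{n,k}` times
the `φ_e` with `e ∣ n`, `1 < e ≤ k`, and each such `φ_e` is missing from `[n choose n-e]_q`. In the
principal ideal domain `ℚ[q]` this pins the generator of `J(n,k)` down to `p_{n,k}`, and the
equality of ideals is transported to `R` along `q ↦ q`.
-/

theorem Ideal.span_eq_span_singleton_of_forall_dvd {R : Type*} [CommRing R] [IsDomain R]
    [IsPrincipalIdealRing R] {S : Set R} {p r : R} (hdvd : ∀ s ∈ S, p ∣ s) (hmem : p * r ∈ S)
    (hne : p * r ≠ 0) (hprime : ∀ π, Prime π → π ∣ r → ∃ s ∈ S, ¬ p * π ∣ s) :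
    Ideal.span S = Ideal.span {p} := by
  obtain ⟨g, hg⟩ := (IsPrincipalIdealRing.principal (Ideal.span S)).principal
  have hg : Ideal.span S = Ideal.span {g} := hg
  have hg_dvd : ∀ s ∈ S, g ∣ s := fun s hs =>
    Ideal.mem_span_singleton.1 (hg ▸ Ideal.subset_span hs)
  have hp_dvd : p ∣ g := by
    have hle : Ideal.span S ≤ Ideal.span {p} :=
      Ideal.span_le.2 fun s hs => Ideal.mem_span_singleton.2 (hdvd s hs)
    exact Ideal.mem_span_singleton.1 (hle (hg ▸ Ideal.mem_span_singleton_self g))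
  obtain ⟨c, rfl⟩ := hp_dvd
  have hp : p ≠ 0 := left_ne_zero_of_mul hne
  have hcr : c ∣ r := (mul_dvd_mul_iff_left hp).1 (hg_dvd _ hmem)
  have hc : IsUnit c := by
    by_contra hc
    obtain ⟨π, hπ, hπc⟩ := WfDvdMonoid.exists_irreducible_factor hc
      (ne_zero_of_dvd_ne_zero (right_ne_zero_of_mul hne) hcr)
    obtain ⟨s, hs, hps⟩ := hprime π hπ.prime (hπc.trans hcr)
    exact hps ((mul_dvd_mul_left p hπc).trans (hg_dvd s hs))
  rw [hg, Ideal.span_singleton_eq_span_singleton]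
  exact (associated_mul_unit_right p c hc).symm

def qBinomMult (n k e : ℕ) : ℕ := n / e - k / e - (n - k) / e

lemma div_eq_add_qBinomMult {n k : ℕ} (e : ℕ) (hkn : k ≤ n) :
    n / e = k / e + (n - k) / e + qBinomMult n k e := by
  have h := Nat.div_add_div_le_add_div (x := k) (y := n - k) (z := e)
  rw [Nat.add_sub_cancel' hkn] at h
  unfold qBinomMult; omega

lemma one_le_qBinomMult {n k e : ℕ} (hkn : k ≤ n) (hen : e ∣ n) (hek : ¬ e ∣ k) :
    1 ≤ qBinomMult n k e := by
  have he : 0 < e := Nat.pos_of_ne_zero (by rintro rfl; exact hek (by simp_all))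
  have h := Nat.add_div_eq_of_le_mod_add_mod
    (Nat.le_mod_add_mod_of_dvd_add_of_not_dvd (Nat.add_sub_cancel' hkn ▸ hen) hek) he
  rw [Nat.add_sub_cancel' hkn] at h
  unfold qBinomMult; omega

lemma qBinomMult_eq_zero {n k e : ℕ} (hkn : k ≤ n) (hek : e ∣ k) : qBinomMult n k e = 0 := by
  have h := Nat.add_div_of_dvd_right (b := n - k) hek
  rw [Nat.add_sub_cancel' hkn] at h
  unfold qBinomMult; omega

lemma qAnalog_eq_prod_cyclotomic {m : ℕ} (hm : 0 < m) :
    qAnalog m = ∏ d ∈ m.divisors.erase 1, cyclotomic d ℚ :=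
  (prod_cyclotomic_eq_geom_sum hm ℚ).symm

lemma qAnalog_monic {m : ℕ} (hm : 0 < m) : (qAnalog m).Monic := by
  rw [qAnalog_eq_prod_cyclotomic hm]
  exact monic_prod_of_monic _ _ fun d _ => cyclotomic.monic d ℚ

lemma qFactorial_monic (m : ℕ) : (qFactorial m).Monic :=
  monic_prod_of_monic _ _ fun i _ => qAnalog_monic i.succ_pos

lemma qFactorial_succ (m : ℕ) : qFactorial (m + 1) = qFactorial m * qAnalog (m + 1) :=
  prod_range_succ _ m

lemma qAnalog_eq_prod_cyclotomic_pow {m N : ℕ} (hm : 0 < m) (hmN : m ≤ N) :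
    qAnalog m = ∏ e ∈ Icc 2 N, cyclotomic e ℚ ^ (if e ∣ m then 1 else 0) := by
  have hdiv : (Icc 2 N).filter (· ∣ m) = m.divisors.erase 1 := by
    ext e
    simp only [mem_filter, mem_Icc, mem_erase, Nat.mem_divisors]
    constructor
    · rintro ⟨⟨h2, -⟩, he⟩
      exact ⟨by omega, he, hm.ne'⟩
    · rintro ⟨h1, he, -⟩
      have := Nat.pos_of_dvd_of_pos he hm
      exact ⟨⟨by omega, (Nat.le_of_dvd hm he).trans hmN⟩, he⟩
  simp_rw [pow_ite, pow_one, pow_zero, ← prod_filter, hdiv, qAnalog_eq_prod_cyclotomic hm]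

lemma qFactorial_eq_prod_cyclotomic_pow {m N : ℕ} (hmN : m ≤ N) :
    qFactorial m = ∏ e ∈ Icc 2 N, cyclotomic e ℚ ^ (m / e) := by
  induction m with
  | zero => simp [qFactorial]
  | succ m ih =>
    rw [qFactorial_succ, ih (by omega), qAnalog_eq_prod_cyclotomic_pow m.succ_pos hmN,
      ← prod_mul_distrib]
    simp_rw [← pow_add, Nat.succ_div]

lemma qBinom_eq_prod_cyclotomic_pow {n k : ℕ} (hkn : k ≤ n) :
    qBinom n k = ∏ e ∈ Icc 2 n, cyclotomic e ℚ ^ qBinomMult n k e := by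
  have h : qFactorial n = qFactorial k * qFactorial (n - k) *
      ∏ e ∈ Icc 2 n, cyclotomic e ℚ ^ qBinomMult n k e := by
    rw [qFactorial_eq_prod_cyclotomic_pow (le_refl n), qFactorial_eq_prod_cyclotomic_pow hkn,
      qFactorial_eq_prod_cyclotomic_pow (Nat.sub_le n k), ← prod_mul_distrib, ← prod_mul_distrib]
    simp_rw [← pow_add, ← div_eq_add_qBinomMult _ hkn]
  rw [qBinom, h, mul_divByMonic_cancel_left _ ((qFactorial_monic k).mul (qFactorial_monic _))]

lemma qBinom_sub_one {n : ℕ} (hn : 0 < n) : qBinom n (n - 1) = qAnalog n := by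
  obtain ⟨m, rfl⟩ := Nat.exists_eq_succ_of_ne_zero hn.ne'
  have h1 : qFactorial 1 = 1 := by simp [qFactorial, qAnalog]
  rw [qBinom, Nat.succ_sub_one, Nat.succ_sub (le_refl m), Nat.sub_self, h1, mul_one,
    qFactorial_succ, mul_divByMonic_cancel_left _ (qFactorial_monic m)]

lemma prod_cyclotomic_dvd_qBinom {n k : ℕ} (hn : 0 < n) (hkn : k ≤ n) {s : Finset ℕ}
    (hs : ∀ e ∈ s, e ∣ n ∧ ¬ e ∣ k) : ∏ e ∈ s, cyclotomic e ℚ ∣ qBinom n k := by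
  have hsub : s ⊆ Icc 2 n := fun e he => by
    obtain ⟨hen, hek⟩ := hs e he
    have h0 : e ≠ 0 := by rintro rfl; exact hn.ne' (zero_dvd_iff.1 hen)
    have h1 : e ≠ 1 := by rintro rfl; exact hek (one_dvd k)
    exact mem_Icc.2 ⟨by omega, Nat.le_of_dvd hn hen⟩
  rw [qBinom_eq_prod_cyclotomic_pow hkn]
  refine (prod_dvd_prod_of_dvd _ _ fun e he => ?_).trans (prod_dvd_prod_of_subset _ _ _ hsub)
  obtain ⟨hen, hek⟩ := hs e he
  exact dvd_pow_self _ (Nat.one_le_iff_ne_zero.1 (one_le_qBinomMult hkn hen hek))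

lemma cyclotomic_not_dvd_qBinom {n k e : ℕ} (he : 0 < e) (hkn : k ≤ n) (hek : e ∣ k) :
    ¬ cyclotomic e ℚ ∣ qBinom n k := by
  have hprime : Prime (cyclotomic e ℚ) := (cyclotomic.irreducible_rat he).prime
  rw [qBinom_eq_prod_cyclotomic_pow hkn]
  intro hdvd
  obtain ⟨e', he', hdvd'⟩ := hprime.exists_mem_finset_dvd hdvd
  have he'0 : 0 < e' := by have := (mem_Icc.1 he').1; omega
  have hmult : qBinomMult n k e' ≠ 0 := by
    rintro h
    rw [h, pow_zero] at hdvd'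
    exact hprime.not_isUnit (isUnit_of_dvd_one hdvd')
  have : e = e' := cyclotomic_injective <| eq_of_monic_of_associated (cyclotomic.monic e ℚ)
    (cyclotomic.monic e' ℚ) <| (cyclotomic.irreducible_rat he).associated_of_dvd
      (cyclotomic.irreducible_rat he'0) (hprime.dvd_of_dvd_pow hdvd')
  subst this
  exact hmult (qBinomMult_eq_zero hkn hek)

lemma span_qBinom_eq_span_prod_cyclotomic {n k : ℕ} (hn : 0 < n) (hk : 1 ≤ k) :
    Ideal.span ((fun d => qBinom n (n - d)) '' {d : ℕ | d ∣ n ∧ d ≤ k}) =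
      Ideal.span {∏ d ∈ n.divisors.filter (fun d => k < d), cyclotomic d ℚ} := by
  have hpr : (∏ d ∈ n.divisors.filter (fun d => k < d), cyclotomic d ℚ) *
      ∏ d ∈ (n.divisors.erase 1).filter (fun d => ¬ k < d), cyclotomic d ℚ =
        qBinom n (n - 1) := by
    have hfilter : (n.divisors.erase 1).filter (fun d => k < d) =
        n.divisors.filter (fun d => k < d) := by
      rw [filter_erase]
      exact erase_eq_of_notMem fun h => by have := (mem_filter.1 h).2; omega
    rw [qBinom_sub_one hn, qAnalog_eq_prod_cyclotomic hn,
      ← prod_filter_mul_prod_filter_not (n.divisors.erase 1) (fun d => k < d), hfilter]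
  refine Ideal.span_eq_span_singleton_of_forall_dvd ?_ ⟨1, ⟨one_dvd n, hk⟩, hpr.symm⟩
    (hpr ▸ qBinom_sub_one hn ▸ (qAnalog_monic hn).ne_zero) ?_
  · rintro _ ⟨d, ⟨hdn, hdk⟩, rfl⟩
    refine prod_cyclotomic_dvd_qBinom hn (Nat.sub_le n d) fun e he => ?_
    obtain ⟨hen, hke⟩ := mem_filter.1 he
    replace hen := Nat.dvd_of_mem_divisors hen
    refine ⟨hen, fun hend => ?_⟩
    have hed : e ∣ d := Nat.sub_sub_self (Nat.le_of_dvd hn hdn) ▸ Nat.dvd_sub hen hend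
    have := Nat.le_of_dvd (Nat.pos_of_dvd_of_pos hdn hn) hed
    omega
  · intro π hπ hπr
    obtain ⟨d, hd, hπd⟩ := hπ.exists_mem_finset_dvd hπr
    obtain ⟨hdn, hdk⟩ := mem_filter.1 hd
    replace hdn := Nat.dvd_of_mem_divisors (mem_of_mem_erase hdn)
    replace hdk := not_lt.1 hdk
    have hd0 : 0 < d := Nat.pos_of_dvd_of_pos hdn hn
    refine ⟨qBinom n (n - d), ⟨d, ⟨hdn, hdk⟩, rfl⟩, fun h => ?_⟩
    have hassoc : Associated π (cyclotomic d ℚ) :=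
      hπ.irreducible.associated_of_dvd (cyclotomic.irreducible_rat hd0) hπd
    exact cyclotomic_not_dvd_qBinom hd0 (Nat.sub_le n d) (Nat.dvd_sub hdn dvd_rfl)
      (hassoc.symm.dvd.trans (dvd_of_mul_left_dvd h))

/-- For `k ∣ n`, the ideal `J(n,k)` of `R = ℚ[q^{±1},t^{±1}]` generated by the Gaussian
binomials `[n choose n-d]_q` for divisors `d` of `n` with `d ≤ k` is principal, generated by
`p_{n,k}(q) = ∏_{d ∣ n, d > k} φ_d(q)`. -/
theorem stmt_9 (n k : ℕ) (hn : 0 < n) (hk : k ∣ n) :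
    Ideal.span ((fun d => (aeval qv (qBinom n (n - d)) : LaurentQT)) ''
        {d : ℕ | d ∣ n ∧ d ≤ k}) =
      Ideal.span {(aeval qv (∏ d ∈ n.divisors.filter (fun d => k < d), cyclotomic d ℚ) :
        LaurentQT)} := by
  rw [← Set.image_image (aeval qv) (fun d => qBinom n (n - d)), ← Ideal.map_span,
    span_qBinom_eq_span_prod_cyclotomic hn (Nat.pos_of_dvd_of_pos hk hn), Ideal.map_span,
    Set.image_singleton]
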